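/- arXiv:2206.00781 — 2 statements merged into one kernel-verified Lean document; each statement's English description precedes it below -/
import Mathlib

section
/- Let π be a uniformly random permutation of a finite set Σ, and let T = T[1..m] be a fixed string over Σ with m ≥ 2 and T[i] ≠ T[i+1] for all i. Then the probability that the sequence π(T[1]), ..., π(T[m]) has no interior local minimum (no i ∈ (1,m) with π(T[i-1]) > π(T[i]) < π(T[i+1])) is at most 2/(⌊m/2⌋+1)!. -/
/-!
Without an interior local minimum, once the values `π (T i)` descend they keep descending, so
either the first `⌊m/2⌋ + 1` of them increase or the last `⌊m/2⌋ + 1` of them decrease. For a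
fixed `k`-tuple of letters, composing the bijections that increase along it with the `k!`
rearrangements of the tuple yields distinct bijections, so at most a `1/k!` fraction of all
bijections increase along it.
-/

open Function

lemma Nat.card_subtype_le_add_of_imp_or {α : Type*} [Finite α] {p q r : α → Prop}
    (h : ∀ x, p x → q x ∨ r x) :
    Nat.card {x // p x} ≤ Nat.card {x // q x} + Nat.card {x // r x} := by
  change Nat.card {x | p x} ≤ Nat.card {x | q x} + Nat.card {x | r x}
  simp only [Nat.card_coe_set_eq]
  exact (Set.ncard_le_ncard h).trans (Set.ncard_union_le _ _)

section StrictMonoAlong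

variable {α β : Type*} [LinearOrder β] {k : ℕ}

lemma injective_trans_viaEmbedding (a : Fin k ↪ α) :
    Injective fun p : {π : α ≃ β // StrictMono (π ∘ a)} × Equiv.Perm (Fin k) =>
      (p.2.viaEmbedding a).trans p.1.1 := by
  rintro ⟨⟨π₁, h₁⟩, σ₁⟩ ⟨⟨π₂, h₂⟩, σ₂⟩ heq
  have on_range (i : Fin k) : π₁ (a (σ₁ i)) = π₂ (a (σ₂ i)) := by
    simpa [Equiv.Perm.viaEmbedding_apply] using DFunLike.congr_fun heq (a i)
  have off_range (x : α) (hx : x ∉ Set.range a) : π₁ x = π₂ x := by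
    simpa [Equiv.Perm.viaEmbedding_apply_of_notMem _ a x hx] using DFunLike.congr_fun heq x
  -- A strictly increasing function on `Fin k` is determined by its range.
  have same_values : π₁ ∘ a = π₂ ∘ a := by
    refine (h₁.range_inj h₂).mp ?_
    rw [← σ₁.surjective.range_comp (π₁ ∘ a), ← σ₂.surjective.range_comp (π₂ ∘ a)]
    exact congrArg Set.range (funext on_range)
  have hπ : π₁ = π₂ := by
    ext x
    by_cases hx : x ∈ Set.range a
    · obtain ⟨i, rfl⟩ := hx
      exact congrFun same_values i
    · exact off_range x hx
  subst hπ
  have hσ : σ₁ = σ₂ := Equiv.ext fun i => a.injective (π₁.injective (on_range i))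
  rw [hσ]

lemma card_strictMono_comp_mul_factorial_le [Finite β] (a : Fin k → α) :
    Nat.card {π : α ≃ β // StrictMono (π ∘ a)} * k.factorial ≤ Nat.card (α ≃ β) := by
  by_cases ha : Injective a
  · have := Nat.card_le_card_of_injective _ (injective_trans_viaEmbedding (β := β) ⟨a, ha⟩)
    rwa [Nat.card_prod, Nat.card_perm, Nat.card_fin] at this
  · have : IsEmpty {π : α ≃ β // StrictMono (π ∘ a)} :=
      ⟨fun π => ha (π.1.injective.of_comp_iff _ |>.mp π.2.injective)⟩
    simp

end StrictMonoAlong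

section NoLocalMin

variable {β : Type*} [LinearOrder β] {x : ℕ → β} {m : ℕ}

lemma lt_of_descent_of_noLocalMin (hadj : ∀ i, 1 ≤ i → i < m → x i ≠ x (i + 1))
    (hmin : ∀ i, 2 ≤ i → i + 1 ≤ m → ¬(x i < x (i - 1) ∧ x i < x (i + 1)))
    {j : ℕ} (hj : 1 ≤ j) (hdesc : x (j + 1) < x j) :
    ∀ i, j ≤ i → i < m → x (i + 1) < x i := by
  intro i hji
  induction i, hji using Nat.le_induction with
  | base => exact fun _ => hdesc
  | succ i hji ih =>
    intro hi
    have hprev : x (i + 1) < x i := ih (by omega)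
    have hne : x (i + 1) ≠ x (i + 2) := hadj (i + 1) (by omega) hi
    have hnotmin := hmin (i + 1) (by omega) (by omega)
    simp only [Nat.add_sub_cancel] at hnotmin
    exact lt_of_le_of_ne (not_lt.1 fun h => hnotmin ⟨hprev, h⟩) hne.symm

lemma strictMono_head_or_strictAnti_tail (hadj : ∀ i, 1 ≤ i → i < m → x i ≠ x (i + 1))
    (hmin : ∀ i, 2 ≤ i → i + 1 ≤ m → ¬(x i < x (i - 1) ∧ x i < x (i + 1)))
    {h : ℕ} (hh : 2 * h ≤ m) :
    StrictMono (fun i : Fin (h + 1) => x (i + 1)) ∨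
      StrictMono (fun i : Fin (h + 1) => x (m - i)) := by
  simp only [Fin.strictMono_iff_lt_succ, Fin.val_castSucc, Fin.val_succ]
  by_cases hup : ∀ i : Fin h, x (i + 1) < x (i + 1 + 1)
  · exact Or.inl hup
  · obtain ⟨j, hj⟩ := not_forall.1 hup
    have hdesc : x (j + 1 + 1) < x (j + 1) :=
      lt_of_le_of_ne (not_lt.1 hj) (hadj (j + 1) (by omega) (by omega)).symm
    refine Or.inr fun n => ?_
    -- `2 * h ≤ m` puts the descent at `j + 1 ≤ h` before the whole tail window.
    have := lt_of_descent_of_noLocalMin hadj hmin (by omega) hdesc (m - (n + 1))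
      (by omega) (by omega)
    rwa [show m - (n + 1) + 1 = m - n by omega] at this

end NoLocalMin

theorem prob_no_local_min_le_general (Alph : Type*) (N m : ℕ) (T : ℕ → Alph)
    (hT : ∀ i : ℕ, 1 ≤ i → i < m → T i ≠ T (i + 1)) :
    Nat.card {π : Alph ≃ Fin N // ∀ i : ℕ, 2 ≤ i → i + 1 ≤ m →
        ¬(π (T i) < π (T (i - 1)) ∧ π (T i) < π (T (i + 1)))} * Nat.factorial (m / 2 + 1) ≤
      2 * Nat.card (Alph ≃ Fin N) := by
  set head : Fin (m / 2 + 1) → Alph := fun i => T (i + 1)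
  set tail : Fin (m / 2 + 1) → Alph := fun i => T (m - i)
  have hsplit := Nat.card_subtype_le_add_of_imp_or
    (q := fun π : Alph ≃ Fin N => StrictMono (π ∘ head))
    (r := fun π : Alph ≃ Fin N => StrictMono (π ∘ tail))
    fun π hmin => strictMono_head_or_strictAnti_tail (x := fun i => π (T i))
      (fun i hi him heq => hT i hi him (π.injective heq)) hmin (Nat.mul_div_le m 2)
  calc _ ≤ (Nat.card {π : Alph ≃ Fin N // StrictMono (π ∘ head)} +
          Nat.card {π : Alph ≃ Fin N // StrictMono (π ∘ tail)}) * (m / 2 + 1).factorial :=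
        Nat.mul_le_mul_right _ hsplit
    _ ≤ Nat.card (Alph ≃ Fin N) + Nat.card (Alph ≃ Fin N) := by
        rw [add_mul]
        exact add_le_add (card_strictMono_comp_mul_factorial_le head)
          (card_strictMono_comp_mul_factorial_le tail)
    _ = 2 * Nat.card (Alph ≃ Fin N) := (two_mul _).symm

/-- For a uniformly random bijection `π : Σ → Fin N` and a fixed string `T 1, ..., T m`
over `Σ` with distinct consecutive characters, the probability that the sequence
`π (T 1), ..., π (T m)` has no interior local minimum is at most `2/(⌊m/2⌋+1)!`,
stated in counting form. -/
theorem prob_no_local_min_le (Alph : Type*) [Fintype Alph] (N m : ℕ)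
    (hN : Fintype.card Alph = N) (hm : 2 ≤ m) (T : ℕ → Alph)
    (hT : ∀ i : ℕ, 1 ≤ i → i < m → T i ≠ T (i + 1)) :
    Nat.card {π : Alph ≃ Fin N // ∀ i : ℕ, 2 ≤ i → i + 1 ≤ m →
        ¬(π (T i) < π (T (i - 1)) ∧ π (T i) < π (T (i + 1)))} * Nat.factorial (m / 2 + 1) ≤
      2 * Nat.card (Alph ≃ Fin N) :=
  prob_no_local_min_le_general Alph N m T hT
end

section
/- Let S be a string of length n and ℓ ≥ 1 an integer with 2ℓ ≤ n. Define L ⊆ [1..n] as the union of the last ℓ positions of S together with all positions covered by the leftmost occurrence of each substring of S of length at most ℓ (a fragment S[a..b] is the leftmost occurrence of a substring w if S[a..b] = w and no earlier fragment of S equals w). Then for every position j ∈ L with ℓ ≤ j ≤ n - ℓ, the fragment S(j-ℓ..j+ℓ] is the leftmost occurrence in S of its own content (a substring of length 2ℓ). Consequently |L| ≤ 2ℓ + d_{2ℓ}(S). -/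
/-- `dk S k` is the number of distinct substrings (contiguous blocks) of `S` of length `k`. -/
noncomputable def dk {α : Type*} (S : List α) (k : ℕ) : ℕ :=
  {t : List α | t.length = k ∧ t <:+: S}.ncard

/-- The content of the fragment of `S` starting at (1-based) position `a` of length `len`. -/
def frag {α : Type*} (S : List α) (a len : ℕ) : List α := (S.drop (a - 1)).take len

/-- The fragment of `S` at position `a` of length `len` is the leftmost occurrence of its
own content. -/
def Leftmost {α : Type*} (S : List α) (a len : ℕ) : Prop :=
  ∀ a' : ℕ, 1 ≤ a' → a' < a → frag S a' len ≠ frag S a len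

lemma frag_shift {α : Type*} (S : List α) (a d l m : ℕ) (ha : 1 ≤ a) (h : d + l ≤ m) :
    frag S (a + d) l = ((frag S a m).drop d).take l := by
  unfold frag
  rw [List.drop_take, List.take_take, List.drop_drop]
  have h1 : a + d - 1 = a - 1 + d := by omega
  have h2 : l ⊓ (m - d) = l := by omega
  rw [h1, h2]

lemma frag_shift_eq {α : Type*} (S : List α) (a b d l m : ℕ) (ha : 1 ≤ a) (hb : 1 ≤ b)
    (h : d + l ≤ m) (heq : frag S a m = frag S b m) :
    frag S (a + d) l = frag S (b + d) l := by
  rw [frag_shift S a d l m ha h, frag_shift S b d l m hb h, heq]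

/-- Claim 3.6 of the paper: let `L` consist of the last `ℓ` positions of `S` together with
all positions covered by the leftmost occurrences of substrings of length at most `ℓ`.
Then every `j ∈ L` with `ℓ ≤ j ≤ n - ℓ` is such that `S(j-ℓ..j+ℓ]` is the leftmost
occurrence of its content; consequently `|L| ≤ 2ℓ + d_{2ℓ}(S)`. -/
theorem covered_positions_bound {α : Type*} (S : List α) (n ℓ : ℕ)
    (hlen : S.length = n) (hℓ : 1 ≤ ℓ) (h2ℓ : 2 * ℓ ≤ n)
    (L : Set ℕ)
    (hL : L = {j : ℕ | 1 ≤ j ∧ j ≤ n ∧ (n - ℓ < j ∨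
      ∃ a len : ℕ, 1 ≤ a ∧ 1 ≤ len ∧ len ≤ ℓ ∧ a + len - 1 ≤ n ∧
        Leftmost S a len ∧ a ≤ j ∧ j ≤ a + len - 1)}) :
    (∀ j ∈ L, ℓ ≤ j → j ≤ n - ℓ → Leftmost S (j - ℓ + 1) (2 * ℓ)) ∧
    L.ncard ≤ 2 * ℓ + dk S (2 * ℓ) := by
  have key : ∀ j ∈ L, ℓ ≤ j → j ≤ n - ℓ → Leftmost S (j - ℓ + 1) (2 * ℓ) := by
    intro j hj hℓj hjn
    rw [hL] at hj
    obtain ⟨hj1, hjn', hcase⟩ := hj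
    rcases hcase with h | ⟨a, len, ha1, hlen1, hlenℓ, hend, hleft, haj, hja⟩
    · exact absurd h (by omega)
    intro a' ha'1 ha'lt heq
    have hd : a = (j - ℓ + 1) + (a - (j - ℓ + 1)) := by omega
    have h1 : frag S (a' + (a - (j - ℓ + 1))) len
        = frag S ((j - ℓ + 1) + (a - (j - ℓ + 1))) len :=
      frag_shift_eq S a' (j - ℓ + 1) (a - (j - ℓ + 1)) len (2 * ℓ) ha'1 (by omega)
        (by omega) heq
    rw [← hd] at h1
    exact hleft (a' + (a - (j - ℓ + 1))) (by omega) (by omega) h1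
  refine ⟨key, ?_⟩
  set T : Set (List α) := {t : List α | t.length = 2 * ℓ ∧ t <:+: S} with hT
  have hdk : dk S (2 * ℓ) = T.ncard := rfl
  have hTfin : T.Finite := by
    apply Set.Finite.subset ((Set.finite_Iic S.length).image
      (fun i => (S.drop i).take (2 * ℓ)))
    rintro t ⟨htl, s, e, hse⟩
    refine ⟨s.length, ?_, ?_⟩
    · simp only [Set.mem_Iic]
      rw [← hse]; simp
    · show (S.drop s.length).take (2 * ℓ) = t
      rw [← hse, List.append_assoc, List.drop_left, ← htl, List.take_left]
  have hLfin : L.Finite := by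
    apply Set.Finite.subset (Set.finite_Icc 1 n)
    rw [hL]; rintro j ⟨h1, h2, _⟩; exact ⟨h1, h2⟩
  set M : Set ℕ := {j | j ∈ L ∧ ℓ ≤ j ∧ j ≤ n - ℓ} with hM
  have hMsub : M ⊆ L := fun j hj => hj.1
  have hMfin : M.Finite := hLfin.subset hMsub
  have hMcard : M.ncard ≤ T.ncard := by
    have hinj : Set.InjOn (fun j => frag S (j - ℓ + 1) (2 * ℓ)) M := by
      intro j1 h1 j2 h2 hfe
      obtain ⟨hj1L, hℓ1, hn1⟩ := h1
      obtain ⟨hj2L, hℓ2, hn2⟩ := h2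
      by_contra hne
      rcases Nat.lt_or_ge j1 j2 with h | h
      · exact key j2 hj2L hℓ2 hn2 (j1 - ℓ + 1) (by omega) (by omega) hfe
      · exact key j1 hj1L hℓ1 hn1 (j2 - ℓ + 1) (by omega) (by omega) hfe.symm
    have himg : (fun j => frag S (j - ℓ + 1) (2 * ℓ)) '' M ⊆ T := by
      rintro t ⟨j, hj, rfl⟩
      obtain ⟨hjL, hℓj, hjn⟩ := hj
      constructor
      · show (frag S (j - ℓ + 1) (2 * ℓ)).length = 2 * ℓ
        unfold frag
        rw [List.length_take, List.length_drop, hlen]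
        omega
      · show frag S (j - ℓ + 1) (2 * ℓ) <:+: S
        exact ((List.take_prefix _ _).isInfix).trans ((List.drop_suffix _ _).isInfix)
    calc M.ncard = ((fun j => frag S (j - ℓ + 1) (2 * ℓ)) '' M).ncard :=
          (Set.ncard_image_of_injOn hinj).symm
      _ ≤ T.ncard := Set.ncard_le_ncard himg hTfin
  have hrest : (L \ M).ncard ≤ 2 * ℓ := by
    have hsub : L \ M ⊆ ↑(Finset.Ico 1 ℓ ∪ Finset.Ioc (n - ℓ) n) := by
      rintro j ⟨hjL, hjM⟩
      have hj' := hjL; rw [hL] at hj'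
      obtain ⟨h1, h2, _⟩ := hj'
      simp only [Finset.coe_union, Finset.coe_Ico, Finset.coe_Ioc, Set.mem_union,
        Set.mem_Ico, Set.mem_Ioc]
      have : ¬ (ℓ ≤ j ∧ j ≤ n - ℓ) := fun hc => hjM ⟨hjL, hc⟩
      omega
    calc (L \ M).ncard ≤ (↑(Finset.Ico 1 ℓ ∪ Finset.Ioc (n - ℓ) n) : Set ℕ).ncard :=
          Set.ncard_le_ncard hsub (Finset.finite_toSet _)
      _ = (Finset.Ico 1 ℓ ∪ Finset.Ioc (n - ℓ) n).card := Set.ncard_coe_finset _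
      _ ≤ (Finset.Ico 1 ℓ).card + (Finset.Ioc (n - ℓ) n).card := Finset.card_union_le _ _
      _ = (ℓ - 1) + (n - (n - ℓ)) := by rw [Nat.card_Ico, Nat.card_Ioc]
      _ ≤ 2 * ℓ := by omega
  calc L.ncard = ((L \ M) ∪ M).ncard := by rw [Set.diff_union_of_subset hMsub]
    _ ≤ (L \ M).ncard + M.ncard := Set.ncard_union_le _ _
    _ ≤ 2 * ℓ + T.ncard := Nat.add_le_add hrest hMcard
    _ = 2 * ℓ + dk S (2 * ℓ) := by rw [hdk]
end
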